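/- arXiv:math/0611812 — 6 statements merged into one kernel-verified Lean document; each statement's English description precedes it below -/
import Mathlib

section
/- The fibers of the Hopf map h(w) = conj(w) * i * w are the orbits of the one-parameter subgroup generated by i: for unit quaternions w and w', one has conj(w') * i * w' = conj(w) * i * w if and only if there exists θ ∈ ℝ such that w' = (Real.cos θ + Real.sin θ • i) * w. -/
open Quaternion

noncomputable section

/-- The quaternion imaginary unit `i`. -/
def qi : ℍ[ℝ] := ⟨0, 1, 0, 0⟩

/-! Write `w' = u * w` with the unit quaternion `u = w' * star w`. Then the Hopf images of `w'`
and `w` agree iff conjugation by `u` fixes `i`, i.e. iff `u` commutes with `i`. The centralizer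
of `i` is `ℝ + ℝ i`, and its unit elements are exactly the `cos θ + sin θ i`. -/

theorem Real.exists_cos_eq_sin_eq_of_sq_add_sq_eq_one {a b : ℝ} (h : a ^ 2 + b ^ 2 = 1) :
    ∃ θ : ℝ, Real.cos θ = a ∧ Real.sin θ = b := by
  have hz : ‖(⟨a, b⟩ : ℂ)‖ = 1 := by
    rw [Complex.norm_def, Complex.normSq_mk, ← Real.sqrt_one]
    congr 1
    linarith
  refine ⟨Complex.arg ⟨a, b⟩, ?_, ?_⟩
  · simpa [hz] using Complex.norm_mul_cos_arg ⟨a, b⟩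
  · simpa [hz] using Complex.norm_mul_sin_arg ⟨a, b⟩

namespace Quaternion

theorem mem_unitary_of_normSq_eq_one {u : ℍ[ℝ]} (hu : normSq u = 1) : u ∈ unitary ℍ[ℝ] :=
  ⟨by rw [star_mul_self, hu, coe_one], by rw [self_mul_star, hu, coe_one]⟩

@[simp] theorem qi_re : qi.re = 0 := rfl
@[simp] theorem qi_imI : qi.imI = 1 := rfl
@[simp] theorem qi_imJ : qi.imJ = 0 := rfl
@[simp] theorem qi_imK : qi.imK = 0 := rfl

theorem commute_qi_iff {u : ℍ[ℝ]} : Commute u qi ↔ u.imJ = 0 ∧ u.imK = 0 := by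
  constructor
  · intro h
    have hJ : u.imK = -u.imK := by simpa using congrArg QuaternionAlgebra.imJ h.eq
    have hK : -u.imJ = u.imJ := by simpa using congrArg QuaternionAlgebra.imK h.eq
    constructor <;> linarith
  · rintro ⟨hJ, hK⟩
    ext <;> simp [hJ, hK]

theorem commute_qi_iff_exists_cos_add_sin_smul {u : ℍ[ℝ]} (hu : normSq u = 1) :
    Commute u qi ↔ ∃ θ : ℝ, u = (Real.cos θ : ℍ[ℝ]) + Real.sin θ • qi := by
  constructor
  · intro h
    obtain ⟨hJ, hK⟩ := commute_qi_iff.1 h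
    have h_circle : u.re ^ 2 + u.imI ^ 2 = 1 := by
      rw [normSq_def', hJ, hK] at hu
      linarith
    obtain ⟨θ, hcos, hsin⟩ := Real.exists_cos_eq_sin_eq_of_sq_add_sq_eq_one h_circle
    exact ⟨θ, by ext <;> simp [hcos, hsin, hJ, hK]⟩
  · rintro ⟨θ, rfl⟩
    exact (coe_commute _ qi).add_left ((Commute.refl qi).smul_left _)

end Quaternion

/-- The fibers of the Hopf map `w ↦ conj w * i * w` are the orbits of the one-parameter
subgroup `e^{iθ} = cos θ + sin θ • i`. -/
theorem hopf_fibers (w w' : ℍ[ℝ]) (hw : normSq w = 1) (hw' : normSq w' = 1) :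
    star w' * qi * w' = star w * qi * w ↔
    ∃ θ : ℝ, w' = ((Real.cos θ : ℍ[ℝ]) + Real.sin θ • qi) * w := by
  have hw_mem := mem_unitary_of_normSq_eq_one hw
  set u := w' * star w
  have hu : u ∈ unitary ℍ[ℝ] :=
    mul_mem (mem_unitary_of_normSq_eq_one hw') (Unitary.star_mem hw_mem)
  have hw'_eq : w' = u * w := by rw [mul_assoc, Unitary.star_mul_self_of_mem hw_mem, mul_one]
  rw [hw'_eq]
  calc star (u * w) * qi * (u * w) = star w * qi * w
      ↔ star w * (star u * qi * u) * w = star w * qi * w := by simp only [star_mul, mul_assoc]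
    _ ↔ star u * qi * u = qi := by
      rw [Unitary.mul_left_inj ⟨w, hw_mem⟩,
        Unitary.mul_right_inj ⟨star w, Unitary.star_mem hw_mem⟩]
    _ ↔ Commute u qi := (commute_unitary_iff_star_left_conjugate hu).symm
    _ ↔ ∃ θ : ℝ, u = (Real.cos θ : ℍ[ℝ]) + Real.sin θ • qi :=
      commute_qi_iff_exists_cos_add_sin_smul (by rw [map_mul, normSq_star, hw, hw', mul_one])
    _ ↔ ∃ θ : ℝ, u * w = ((Real.cos θ : ℍ[ℝ]) + Real.sin θ • qi) * w := by
      simp only [Unitary.mul_left_inj ⟨w, hw_mem⟩]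
end
end

section
/- The Hopf map is surjective onto the unit sphere of imaginary quaternions: for every quaternion v with Re v = 0 and normSq v = 1, there exists a unit quaternion w such that conj(w) * i * w = v. -/
/-!
If `a` and `b` are unit imaginary quaternions then `a² = b² = -1`, so `u = a + b` satisfies
`a * u = u * b`; hence `star u * a * u = normSq u • b`, and normalizing a nonzero such `u` gives a
unit `w` with `star w * a * w = b`. For `a = i` this fails only for `v = -i`, where `u = j` serves
because `i` and `j` anticommute.
-/

open Quaternion

noncomputable section

namespace Quaternion

section Ring

variable {R : Type*} [CommRing R]

theorem mul_add_eq_add_mul_of_mul_self {a b : ℍ[R]} (ha : a * a = -1) (hb : b * b = -1) :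
    a * (a + b) = (a + b) * b := by
  rw [mul_add, add_mul, ha, hb, add_comm]

theorem star_mul_mul_eq_normSq_smul {a b u : ℍ[R]} (h : a * u = u * b) :
    star u * a * u = normSq u • b := by
  rw [mul_assoc, h, ← mul_assoc, star_mul_self, ← coe_mul_eq_smul]

end Ring

theorem mul_self_eq_neg_one {R : Type*} [CommRing R] [LinearOrder R] [IsStrictOrderedRing R]
    {a : ℍ[R]} (hre : a.re = 0) (hnorm : normSq a = 1) : a * a = -1 := by
  rw [← sq, sq_eq_neg_normSq.mpr hre, hnorm, coe_one]

theorem exists_normSq_eq_one_star_mul_mul_eq {a b u : ℍ[ℝ]} (hu : u ≠ 0) (h : a * u = u * b) :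
    ∃ w : ℍ[ℝ], normSq w = 1 ∧ star w * a * w = b := by
  have hw : normSq (‖u‖⁻¹ • u) = 1 := by
    rw [normSq_smul, normSq_eq_norm_mul_self]
    field_simp
  refine ⟨‖u‖⁻¹ • u, hw, ?_⟩
  rw [star_mul_mul_eq_normSq_smul (by rw [mul_smul_comm, h, smul_mul_assoc]), hw, one_smul]

end Quaternion

def qj : ℍ[ℝ] := ⟨0, 0, 1, 0⟩

theorem qi_mul_self : qi * qi = -1 := by
  ext <;> simp [re_mul, imI_mul, imJ_mul, imK_mul] <;> simp [qi]

theorem qi_mul_qj : qi * qj = qj * -qi := by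
  ext <;> simp [re_mul, imI_mul, imJ_mul, imK_mul] <;> simp [qi, qj]

theorem qj_ne_zero : qj ≠ 0 :=
  ne_of_apply_ne QuaternionAlgebra.imJ (by simp [qj])

/-- The Hopf map is surjective onto the unit sphere of imaginary quaternions. -/
theorem hopf_surjective (v : ℍ[ℝ]) (hv_im : v.re = 0) (hv_norm : normSq v = 1) :
    ∃ w : ℍ[ℝ], normSq w = 1 ∧ star w * qi * w = v := by
  by_cases hv : qi + v = 0
  · rw [eq_neg_of_add_eq_zero_right hv]
    exact exists_normSq_eq_one_star_mul_mul_eq qj_ne_zero qi_mul_qj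
  · exact exists_normSq_eq_one_star_mul_mul_eq hv
      (mul_add_eq_add_mul_of_mul_self qi_mul_self (mul_self_eq_neg_one hv_im hv_norm))
end
end

section
/- Two pairs of unit quaternions define the same point of the configuration space M (i.e. the same isometry between Hopf fibers) exactly when they lie on one orbit of the diagonal circle action: for unit quaternions w₁, w₂, w₁', w₂', one has conj(w₁') * i * w₁' = conj(w₁) * i * w₁ and conj(w₁') * w₂' = conj(w₁) * w₂ if and only if there exists θ ∈ ℝ such that w₁' = (Real.cos θ + Real.sin θ • i) * w₁ and w₂' = (Real.cos θ + Real.sin θ • i) * w₂. -/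
/-! For unit quaternions, `u := w₁' * star w₁` is the unit with `w₁' = u * w₁`. The first condition
says exactly that `u` commutes with `i`, and then the second says `w₂' = u * w₂`. The unit quaternions
commuting with `i` are the unit complex numbers `ℂ ⊆ ℍ`, i.e. the `e^{iθ}`. -/

open Quaternion

noncomputable section

section Unitary

variable {R : Type*} [Monoid R] [StarMul R]

theorem star_mul_mul_eq_and_star_mul_eq_iff {w₁ w₁' : R} (hw₁ : w₁ ∈ unitary R)
    (hw₁' : w₁' ∈ unitary R) (x w₂ w₂' : R) :
    (star w₁' * x * w₁' = star w₁ * x * w₁ ∧ star w₁' * w₂' = star w₁ * w₂) ↔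
    ∃ u ∈ unitary R, Commute u x ∧ w₁' = u * w₁ ∧ w₂' = u * w₂ := by
  constructor
  · rintro ⟨hx, hw₂⟩
    refine ⟨w₁' * star w₁, mul_mem hw₁' (Unitary.star_mem hw₁), ?_, ?_, ?_⟩
    · calc w₁' * star w₁ * x
          = w₁' * star w₁ * x * (w₁ * star w₁) := by rw [Unitary.mul_star_self_of_mem hw₁, mul_one]
        _ = w₁' * (star w₁ * x * w₁) * star w₁ := by simp only [mul_assoc]
        _ = w₁' * (star w₁' * x * w₁') * star w₁ := by rw [hx]
        _ = (w₁' * star w₁') * x * (w₁' * star w₁) := by simp only [mul_assoc]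
        _ = x * (w₁' * star w₁) := by rw [Unitary.mul_star_self_of_mem hw₁', one_mul]
    · rw [mul_assoc, Unitary.star_mul_self_of_mem hw₁, mul_one]
    · rw [mul_assoc, ← hw₂, ← mul_assoc, Unitary.mul_star_self_of_mem hw₁', one_mul]
  · rintro ⟨u, hu, hux, rfl, rfl⟩
    have hstar : star u * u = 1 := Unitary.star_mul_self_of_mem hu
    constructor
    · calc star (u * w₁) * x * (u * w₁)
          = star w₁ * (star u * (u * x)) * w₁ := by simp only [star_mul, hux.eq, mul_assoc]
        _ = star w₁ * x * w₁ := by rw [← mul_assoc (star u), hstar, one_mul]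
    · rw [star_mul, mul_assoc, ← mul_assoc (star u), hstar, one_mul]

end Unitary

namespace Quaternion

theorem mem_unitary_iff_normSq_eq_one {u : ℍ[ℝ]} : u ∈ unitary ℍ[ℝ] ↔ normSq u = 1 := by
  rw [Unitary.mem_iff, star_mul_self, self_mul_star, and_self, ← coe_one, coe_inj]

theorem normSq_coeComplex (z : ℂ) : normSq (z : ℍ[ℝ]) = Complex.normSq z := by
  simp [normSq_def', Complex.normSq_apply, sq]

theorem coeComplex_I : ((Complex.I : ℂ) : ℍ[ℝ]) = qi := rfl

theorem coeComplex_exp_mul_I (θ : ℝ) :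
    ((Complex.exp (θ * Complex.I) : ℂ) : ℍ[ℝ]) = (Real.cos θ : ℍ[ℝ]) + Real.sin θ • qi := by
  rw [Complex.exp_mul_I, ← Complex.ofReal_cos, ← Complex.ofReal_sin, coeComplex_add,
    coeComplex_mul, coeComplex_coe, coeComplex_coe, coeComplex_I, coe_mul_eq_smul]

theorem commute_qi_iff_exists_coeComplex {u : ℍ[ℝ]} :
    Commute u qi ↔ ∃ z : ℂ, (z : ℍ[ℝ]) = u := by
  rw [← coeComplex_I]
  constructor
  · intro h
    have hj := congrArg QuaternionAlgebra.imJ h.eq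
    have hk := congrArg QuaternionAlgebra.imK h.eq
    simp only [imJ_mul, imK_mul, re_coeComplex, imI_coeComplex, imJ_coeComplex, imK_coeComplex,
      Complex.I_re, Complex.I_im, mul_zero, mul_one, zero_mul, one_mul, add_zero, zero_add,
      sub_self, sub_zero, zero_sub] at hj hk
    exact ⟨⟨u.re, u.imI⟩, by ext <;> simp <;> linarith⟩
  · rintro ⟨z, rfl⟩
    simpa using (Commute.all z Complex.I).map ofComplex

theorem coeComplex_mem_unitary_iff {z : ℂ} : (z : ℍ[ℝ]) ∈ unitary ℍ[ℝ] ↔ ‖z‖ = 1 := by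
  rw [mem_unitary_iff_normSq_eq_one, normSq_coeComplex, Complex.normSq_eq_norm_sq,
    pow_eq_one_iff_of_nonneg (norm_nonneg z) two_ne_zero]

theorem mem_unitary_and_commute_qi_iff {u : ℍ[ℝ]} :
    u ∈ unitary ℍ[ℝ] ∧ Commute u qi ↔ ∃ θ : ℝ, u = (Real.cos θ : ℍ[ℝ]) + Real.sin θ • qi := by
  constructor
  · rintro ⟨hu, hcomm⟩
    obtain ⟨z, rfl⟩ := commute_qi_iff_exists_coeComplex.1 hcomm
    obtain ⟨θ, rfl⟩ := (Complex.norm_eq_one_iff z).1 (coeComplex_mem_unitary_iff.1 hu)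
    exact ⟨θ, coeComplex_exp_mul_I θ⟩
  · rintro ⟨θ, rfl⟩
    rw [← coeComplex_exp_mul_I]
    exact ⟨coeComplex_mem_unitary_iff.2 (Complex.norm_exp_ofReal_mul_I θ),
      commute_qi_iff_exists_coeComplex.2 ⟨_, rfl⟩⟩

end Quaternion

theorem configuration_space_circle_action_general (w₁ w₂ w₁' w₂' : ℍ[ℝ])
    (h₁ : normSq w₁ = 1) (h₁' : normSq w₁' = 1) :
    (star w₁' * qi * w₁' = star w₁ * qi * w₁ ∧ star w₁' * w₂' = star w₁ * w₂) ↔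
    ∃ θ : ℝ, w₁' = ((Real.cos θ : ℍ[ℝ]) + Real.sin θ • qi) * w₁ ∧
             w₂' = ((Real.cos θ : ℍ[ℝ]) + Real.sin θ • qi) * w₂ := by
  rw [star_mul_mul_eq_and_star_mul_eq_iff (mem_unitary_iff_normSq_eq_one.2 h₁)
    (mem_unitary_iff_normSq_eq_one.2 h₁')]
  constructor
  · rintro ⟨u, hu, hcomm, rfl, rfl⟩
    obtain ⟨θ, rfl⟩ := mem_unitary_and_commute_qi_iff.1 ⟨hu, hcomm⟩
    exact ⟨θ, rfl, rfl⟩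
  · rintro ⟨θ, rfl, rfl⟩
    obtain ⟨hu, hcomm⟩ := mem_unitary_and_commute_qi_iff.2 ⟨θ, rfl⟩
    exact ⟨_, hu, hcomm, rfl, rfl⟩

/-- Two pairs of unit quaternions define the same point of the configuration space `M`
iff they lie on one orbit of the diagonal circle action. -/
theorem configuration_space_circle_action (w₁ w₂ w₁' w₂' : ℍ[ℝ])
    (h₁ : normSq w₁ = 1) (h₂ : normSq w₂ = 1) (h₁' : normSq w₁' = 1) (h₂' : normSq w₂' = 1) :
    (star w₁' * qi * w₁' = star w₁ * qi * w₁ ∧ star w₁' * w₂' = star w₁ * w₂) ↔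
    ∃ θ : ℝ, w₁' = ((Real.cos θ : ℍ[ℝ]) + Real.sin θ • qi) * w₁ ∧
             w₂' = ((Real.cos θ : ℍ[ℝ]) + Real.sin θ • qi) * w₂ :=
  configuration_space_circle_action_general w₁ w₂ w₁' w₂' h₁ h₁'
end
end

section
/- For every nonzero x ∈ ℍ × ℍ with x ⊛ x = 0, the space of imaginary divisors of zero annihilated by x, namely Δ_x = {y ∈ ℍ × ℍ : Re (y.1) = 0 and x ⊛ y = 0}, is a real vector subspace of ℍ × ℍ of dimension 3. -/
/-!
Write `x = (a, b)`. The two components of `x ⊛ x = 0` say `a * a + b * conj b = 0` and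
`(conj a + a) * b = 0`; hence `b ≠ 0` (otherwise `a * a = 0` forces `x = 0`), `Re a = 0` and
`a * a = -normSq b`. The first component of `x ⊛ y = 0` determines
`y.2 = -(normSq b)⁻¹ • (a * y.1 * b)`, and for this `y.2` the identities on `a` make the second
component vanish. So the annihilator of `x` is the graph of a linear map `ℍ → ℍ`, and `Δ_x` is its
restriction to the three-dimensional space of imaginary quaternions.
-/

open Quaternion

noncomputable section

/-- The split-octonion product on `ℍ × ℍ`: `(a,b) ⊛ (c,d) = (a*c + d*conj b, conj a * d + c*b)`. -/
def omul (x y : ℍ[ℝ] × ℍ[ℝ]) : ℍ[ℝ] × ℍ[ℝ] :=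
  (x.1 * y.1 + y.2 * star x.2, star x.1 * y.2 + y.1 * x.2)

section Graph

variable {R M N : Type*} [Semiring R] [AddCommMonoid M] [AddCommMonoid N] [Module R M]
  [Module R N]

theorem Submodule.mem_map_id_prod_iff (f : M →ₗ[R] N) (K : Submodule R M) (y : M × N) :
    y ∈ K.map (LinearMap.id.prod f) ↔ y.1 ∈ K ∧ y.2 = f y.1 := by
  constructor
  · rintro ⟨c, hc, rfl⟩
    exact ⟨hc, rfl⟩
  · rintro ⟨hc, hy⟩
    exact ⟨y.1, hc, Prod.ext rfl hy.symm⟩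

theorem Submodule.finrank_map_id_prod [StrongRankCondition R] (f : M →ₗ[R] N)
    (K : Submodule R M) :
    Module.finrank R (K.map (LinearMap.id.prod f)) = Module.finrank R K :=
  (Submodule.equivMapOfInjective _ (fun _ _ h => congrArg Prod.fst h) K).finrank_eq.symm

end Graph

theorem QuaternionAlgebra.finrank_ker_reₗ {R : Type*} [Field R] (c₁ c₂ c₃ : R) :
    Module.finrank R (LinearMap.ker (reₗ c₁ c₂ c₃)) = 3 := by
  have hsurj : LinearMap.range (reₗ c₁ c₂ c₃) = ⊤ :=
    LinearMap.range_eq_top.mpr fun r => ⟨(r : ℍ[R,c₁,c₂,c₃]), rfl⟩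
  have := LinearMap.finrank_range_add_finrank_ker (reₗ c₁ c₂ c₃)
  rw [hsurj, finrank_top, finrank_eq_four, Module.finrank_self] at this
  omega

variable {x : ℍ[ℝ] × ℍ[ℝ]}

theorem snd_ne_zero_of_omul_self_eq_zero (hx : x ≠ 0) (hxx : omul x x = 0) : x.2 ≠ 0 := by
  intro hb
  have : x.1 * x.1 = 0 := by simpa [omul, hb] using congrArg Prod.fst hxx
  exact hx (Prod.ext (mul_self_eq_zero.mp this) hb)

theorem star_fst_of_omul_self_eq_zero (hb : x.2 ≠ 0) (hxx : omul x x = 0) :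
    star x.1 = -x.1 := by
  have : (star x.1 + x.1) * x.2 = 0 := by rw [add_mul]; exact congrArg Prod.snd hxx
  exact eq_neg_of_add_eq_zero_left ((mul_eq_zero.mp this).resolve_right hb)

theorem fst_mul_self_of_omul_self_eq_zero (hxx : omul x x = 0) :
    x.1 * x.1 = -((normSq x.2 : ℝ) : ℍ[ℝ]) := by
  rw [← Quaternion.self_mul_star]
  exact eq_neg_of_add_eq_zero_left (congrArg Prod.fst hxx)

def annihilatorMap (x : ℍ[ℝ] × ℍ[ℝ]) : ℍ[ℝ] →ₗ[ℝ] ℍ[ℝ] :=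
  -(normSq x.2)⁻¹ • LinearMap.mulLeftRight ℝ x

theorem annihilatorMap_apply (c : ℍ[ℝ]) :
    annihilatorMap x c = -(normSq x.2)⁻¹ • (x.1 * c * x.2) := rfl

theorem omul_eq_zero_iff (hb : x.2 ≠ 0) (hxx : omul x x = 0) (y : ℍ[ℝ] × ℍ[ℝ]) :
    omul x y = 0 ↔ y.2 = annihilatorMap x y.1 := by
  have hn : normSq x.2 ≠ 0 := normSq_ne_zero.mpr hb
  rw [annihilatorMap_apply, omul, Prod.mk_eq_zero]
  constructor
  · rintro ⟨h, -⟩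
    have hd : normSq x.2 • y.2 = -(x.1 * y.1 * x.2) := by
      rw [← mul_coe_eq_smul, ← star_mul_self, ← mul_assoc, eq_neg_of_add_eq_zero_right h,
        neg_mul]
    rw [neg_smul, ← smul_neg, ← hd, smul_smul, inv_mul_cancel₀ hn, one_smul]
  · intro hy
    rw [hy, star_fst_of_omul_self_eq_zero hb hxx]
    constructor
    · calc x.1 * y.1 + -(normSq x.2)⁻¹ • (x.1 * y.1 * x.2) * star x.2
          = x.1 * y.1 - (normSq x.2)⁻¹ • (x.1 * y.1 * (x.2 * star x.2)) := by
            rw [neg_smul, neg_mul, smul_mul_assoc, mul_assoc, sub_eq_add_neg]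
        _ = x.1 * y.1 - (normSq x.2)⁻¹ • normSq x.2 • (x.1 * y.1) := by
            rw [Quaternion.self_mul_star, mul_coe_eq_smul]
        _ = 0 := by rw [inv_smul_smul₀ hn, sub_self]
    · calc -x.1 * (-(normSq x.2)⁻¹ • (x.1 * y.1 * x.2)) + y.1 * x.2
          = (normSq x.2)⁻¹ • (x.1 * x.1 * (y.1 * x.2)) + y.1 * x.2 := by
            rw [mul_smul_comm, neg_smul, neg_mul, smul_neg, neg_neg, ← mul_assoc, ← mul_assoc,
              mul_assoc]
        _ = (normSq x.2)⁻¹ • -(normSq x.2 • (y.1 * x.2)) + y.1 * x.2 := by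
            rw [fst_mul_self_of_omul_self_eq_zero hxx, neg_mul, coe_mul_eq_smul]
        _ = 0 := by rw [smul_neg, inv_smul_smul₀ hn, neg_add_cancel]

/-- For every nonzero square-zero split-octonion `x`, the set
`Δ_x = {y : Re y.1 = 0, x ⊛ y = 0}` of imaginary divisors of zero annihilated by `x`
is a real vector subspace of dimension 3. -/
theorem annihilator_is_three_dimensional (x : ℍ[ℝ] × ℍ[ℝ]) (hx : x ≠ 0)
    (hxx : omul x x = 0) :
    ∃ S : Submodule ℝ (ℍ[ℝ] × ℍ[ℝ]),
      (S : Set (ℍ[ℝ] × ℍ[ℝ])) = {y | y.1.re = 0 ∧ omul x y = 0} ∧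
      Module.finrank ℝ S = 3 := by
  have hb := snd_ne_zero_of_omul_self_eq_zero hx hxx
  refine ⟨(LinearMap.ker (QuaternionAlgebra.reₗ _ _ _)).map
    (LinearMap.id.prod (annihilatorMap x)), ?_, ?_⟩
  · ext y
    exact (Submodule.mem_map_id_prod_iff _ _ y).trans
      (and_congr Iff.rfl (omul_eq_zero_iff hb hxx y).symm)
  · exact (Submodule.finrank_map_id_prod _ _).trans (QuaternionAlgebra.finrank_ker_reₗ _ _ _)
end
end

section
/- Let v be a quaternion with Re v = 0 and normSq v = 1. Then the image of the linear map w ↦ w + v*w*v on ℍ is exactly the set {u ∈ ℍ : Re u = 0 and Re (v*u) = 0}. -/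
open Quaternion

noncomputable section

/-!
If `v` is a unit imaginary quaternion then `v * v = -1`. Since `Re (a * b) = Re (b * a)`, this gives
`Re (v * w * v) = -Re w` and `Re (v * v * w * v) = -Re (w * v)`, so every `w + v * w * v` lies in the
set. Conversely, two imaginary quaternions `u`, `v` with `Re (v * u) = 0` anticommute, hence
`v * u * v = u` and `u` is the image of `u / 2`.
-/

namespace Quaternion

variable {R : Type*} [CommRing R]

theorem re_mul_comm (a b : ℍ[R]) : (a * b).re = (b * a).re := by
  simp only [re_mul]
  ring

theorem star_eq_neg_of_re_eq_zero {a : ℍ[R]} (h : a.re = 0) : star a = -a := by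
  ext <;> simp [h]

theorem mul_self_eq_neg_one_of_re_eq_zero {v : ℍ[R]} (hre : v.re = 0) (hnorm : normSq v = 1) :
    v * v = -1 := by
  have h := self_mul_star v
  rw [star_eq_neg_of_re_eq_zero hre, hnorm, mul_neg] at h
  simpa using congrArg Neg.neg h

theorem mul_add_mul_comm_of_re_eq_zero {u v : ℍ[R]} (hu : u.re = 0) (hv : v.re = 0) :
    v * u + u * v = ((2 * (v * u).re : R) : ℍ[R]) := by
  have hstar : star (v * u) = u * v := by
    rw [star_mul, star_eq_neg_of_re_eq_zero hu, star_eq_neg_of_re_eq_zero hv, neg_mul_neg]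
  rw [← hstar, self_add_star']

theorem mul_mul_self_eq_of_re_mul_eq_zero {u v : ℍ[R]} (hu : u.re = 0) (hv : v.re = 0)
    (hvu : (v * u).re = 0) (hvv : v * v = -1) : v * u * v = u := by
  have hanti : v * u = -(u * v) := by
    rw [eq_neg_iff_add_eq_zero, mul_add_mul_comm_of_re_eq_zero hu hv, hvu, mul_zero, coe_zero]
  rw [hanti, neg_mul, mul_assoc, hvv, mul_neg_one, neg_neg]

variable {v : ℍ[R]}

theorem re_add_mul_mul_eq_zero (hvv : v * v = -1) (w : ℍ[R]) : (w + v * w * v).re = 0 := by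
  rw [re_add, re_mul_comm, ← mul_assoc, hvv, neg_one_mul, re_neg, add_neg_cancel]

theorem re_mul_add_mul_mul_eq_zero (hvv : v * v = -1) (w : ℍ[R]) :
    (v * (w + v * w * v)).re = 0 := by
  rw [mul_add, ← mul_assoc, ← mul_assoc, hvv, neg_one_mul, neg_mul, re_add, re_neg,
    re_mul_comm, add_neg_cancel]

end Quaternion

/-- For a unit imaginary quaternion `v`, the image of `w ↦ w + v*w*v` is exactly the set
of imaginary quaternions `u` with `v*u` also imaginary. -/
theorem range_of_reflection_map (v : ℍ[ℝ]) (hv_im : v.re = 0) (hv : normSq v = 1) :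
    Set.range (fun w : ℍ[ℝ] => w + v * w * v) =
    {u : ℍ[ℝ] | u.re = 0 ∧ (v * u).re = 0} := by
  have hvv := mul_self_eq_neg_one_of_re_eq_zero hv_im hv
  ext u
  constructor
  · rintro ⟨w, rfl⟩
    exact ⟨re_add_mul_mul_eq_zero hvv w, re_mul_add_mul_mul_eq_zero hvv w⟩
  · rintro ⟨hu, hvu⟩
    refine ⟨(2⁻¹ : ℝ) • u, ?_⟩
    dsimp only
    rw [mul_smul_comm, smul_mul_assoc, mul_mul_self_eq_of_re_mul_eq_zero hu hv_im hvu hvv,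
      ← add_smul]
    norm_num
end
end

section
/- The automorphism group of the split-octonions acts transitively on the spherization of the null cone: for any nonzero x, y ∈ ℍ × ℍ with Re (x.1) = 0, x ⊛ x = 0, Re (y.1) = 0, y ⊛ y = 0, there exist a bijective ℝ-linear map φ : ℍ × ℍ → ℍ × ℍ satisfying φ(u ⊛ v) = φ(u) ⊛ φ(v) for all u, v, and a real number λ > 0, such that φ(x) = λ • y. -/
open Quaternion

noncomputable section

/-!
Pairs `(q, r)` of unit quaternions act on `ℍ × ℍ` by `(a, b) ↦ (q a q̄, q b r̄)`, and these maps
are automorphisms of the split-octonion product. On a null vector `(a, b)` with `Re a = 0` one has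
`|a| = |b|`, so it suffices to move every such vector to a positive multiple of `(i, 1)`: choose
`q` rotating the pure quaternion `a` onto `|a| i` (explicitly, `q ∝ |a| - i a`, or `j` when this
vanishes), then `r = q b / |b|` turns the second component into `|b|`.
-/

namespace Unitary

variable {R : Type*} [Monoid R] [StarMul R]

theorem star_mul_cancel_left (U : unitary R) (z : R) : star (U : R) * (U * z) = z := by
  rw [← mul_assoc, star_mul_self_of_mem U.prop, one_mul]

theorem mul_star_cancel_left (U : unitary R) (z : R) : (U : R) * (star (U : R) * z) = z := by
  rw [← mul_assoc, mul_star_self_of_mem U.prop, one_mul]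

end Unitary

namespace SplitOctonion

def unitaryAct (q r : unitary ℍ) : (ℍ × ℍ) ≃ₗ[ℝ] (ℍ × ℍ) where
  toFun x := (q * x.1 * star (q : ℍ), q * x.2 * star (r : ℍ))
  invFun x := (star (q : ℍ) * x.1 * q, star (q : ℍ) * x.2 * r)
  map_add' x y := by simp only [Prod.fst_add, Prod.snd_add, mul_add, add_mul, Prod.mk_add_mk]
  map_smul' c x := by simp [Algebra.mul_smul_comm, Algebra.smul_mul_assoc]
  left_inv x := by
    simp [mul_assoc, Unitary.star_mul_cancel_left]
  right_inv x := by
    simp [mul_assoc, Unitary.mul_star_cancel_left]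

@[simp]
theorem unitaryAct_apply (q r : unitary ℍ) (x : ℍ × ℍ) :
    unitaryAct q r x = (q * x.1 * star (q : ℍ), q * x.2 * star (r : ℍ)) := rfl

theorem unitaryAct_symm (q r : unitary ℍ) :
    (unitaryAct q r).symm = unitaryAct (star q) (star r) := by
  ext x : 1
  simp [LinearEquiv.symm_apply_eq, mul_assoc, Unitary.mul_star_cancel_left]

theorem unitaryAct_omul (q r : unitary ℍ) (u v : ℍ × ℍ) :
    unitaryAct q r (omul u v) = omul (unitaryAct q r u) (unitaryAct q r v) := by
  simp [omul, mul_add, add_mul, mul_assoc, Unitary.star_mul_cancel_left]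

def quatI : ℍ := ⟨0, 1, 0, 0⟩

theorem quatI_mul_quatI : quatI * quatI = -1 := by
  ext <;> simp only [re_mul, imI_mul, imJ_mul, imK_mul] <;> simp [quatI]

def quatJ : ℍ := ⟨0, 0, 1, 0⟩

theorem quatJ_mul_quatI : quatJ * quatI = -(quatI * quatJ) := by
  ext <;> simp only [re_mul, imI_mul, imJ_mul, imK_mul, re_neg, imI_neg, imJ_neg, imK_neg] <;>
    simp [quatI, quatJ]

theorem mem_unitary_of_norm_eq_one {u : ℍ} (hu : ‖u‖ = 1) : u ∈ unitary ℍ := by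
  rw [Unitary.mem_iff, star_mul_self, self_mul_star, normSq_eq_norm_mul_self, hu, mul_one,
    coe_one, and_self]

theorem mul_self_eq_neg_norm_mul_norm {a : ℍ} (ha : a.re = 0) :
    a * a = -((‖a‖ * ‖a‖ : ℝ) : ℍ) := by
  rw [← sq, sq_eq_neg_normSq.mpr ha, normSq_eq_norm_mul_self]

theorem exists_ne_zero_mul_eq_smul_quatI_mul {a : ℍ} {ρ : ℝ} (h : a * a = -((ρ * ρ : ℝ) : ℍ)) :
    ∃ s : ℍ, s ≠ 0 ∧ s * a = ρ • (quatI * s) := by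
  by_cases hs : (ρ : ℍ) - quatI * a = 0
  · have ha : a = -ρ • quatI := by
      have := congrArg (quatI * ·) (sub_eq_zero.mp hs)
      simp only [← mul_assoc, quatI_mul_quatI, neg_one_mul, mul_coe_eq_smul] at this
      rw [neg_smul, this, neg_neg]
    refine ⟨quatJ, fun h => by simpa [quatJ] using congrArg QuaternionAlgebra.imJ h, ?_⟩
    rw [ha, mul_smul_comm, quatJ_mul_quatI, neg_smul, smul_neg, neg_neg]
  · refine ⟨_, hs, ?_⟩
    calc ((ρ : ℍ) - quatI * a) * a = ρ • a - quatI * (a * a) := by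
          rw [sub_mul, mul_assoc, coe_mul_eq_smul]
      _ = ρ • a + (ρ * ρ) • quatI := by rw [h, mul_neg, mul_coe_eq_smul, sub_neg_eq_add]
      _ = ρ • (quatI * ((ρ : ℍ) - quatI * a)) := by
          rw [mul_sub, ← mul_assoc, quatI_mul_quatI, mul_coe_eq_smul, neg_one_mul]
          module

theorem exists_unitary_conj_eq_smul_quatI {a : ℍ} (ha : a.re = 0) :
    ∃ q : unitary ℍ, q * a * star (q : ℍ) = ‖a‖ • quatI := by
  obtain ⟨s, hs, hsa⟩ := exists_ne_zero_mul_eq_smul_quatI_mul (mul_self_eq_neg_norm_mul_norm ha)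
  refine ⟨⟨‖s‖⁻¹ • s, mem_unitary_of_norm_eq_one (norm_smul_inv_norm hs)⟩, ?_⟩
  have hs' : ‖s‖ ≠ 0 := norm_ne_zero_iff.mpr hs
  calc ‖s‖⁻¹ • s * a * star (‖s‖⁻¹ • s) = (‖s‖⁻¹ * ‖s‖⁻¹ * ‖a‖) • (quatI * (s * star s)) := by
        simp only [Quaternion.star_smul, smul_mul_assoc, mul_smul_comm, hsa, smul_smul, mul_assoc]
    _ = ‖a‖ • quatI := by
        rw [self_mul_star, normSq_eq_norm_mul_self, mul_coe_eq_smul, smul_smul]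
        congr 1
        field_simp

theorem exists_unitary_mul_star_eq_norm {p : ℍ} (hp : p ≠ 0) :
    ∃ r : unitary ℍ, p * star (r : ℍ) = ‖p‖ := by
  refine ⟨⟨‖p‖⁻¹ • p, mem_unitary_of_norm_eq_one (norm_smul_inv_norm hp)⟩, ?_⟩
  have hp' : ‖p‖ ≠ 0 := norm_ne_zero_iff.mpr hp
  rw [Quaternion.star_smul, mul_smul_comm, self_mul_star, normSq_eq_norm_mul_self, smul_coe]
  congr 1
  field_simp

theorem norm_fst_eq_norm_snd_of_omul_self_eq_zero {x : ℍ × ℍ} (hre : x.1.re = 0)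
    (hxx : omul x x = 0) : ‖x.1‖ = ‖x.2‖ := by
  have h : x.1 * x.1 + x.2 * star x.2 = 0 := congrArg Prod.fst hxx
  rw [mul_self_eq_neg_norm_mul_norm hre, self_mul_star, normSq_eq_norm_mul_self, neg_add_eq_zero,
    coe_inj] at h
  exact (mul_self_inj (norm_nonneg _) (norm_nonneg _)).mp h

theorem norm_fst_pos_of_omul_self_eq_zero {x : ℍ × ℍ} (hx : x ≠ 0) (hre : x.1.re = 0)
    (hxx : omul x x = 0) : 0 < ‖x.1‖ := by
  refine norm_pos_iff.mpr fun h1 => hx (Prod.ext h1 (norm_eq_zero.mp ?_))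
  rw [← norm_fst_eq_norm_snd_of_omul_self_eq_zero hre hxx, h1, norm_zero]

def nullBase : ℍ × ℍ := (quatI, 1)

theorem exists_unitaryAct_eq_smul_nullBase {x : ℍ × ℍ} (hx : x ≠ 0) (hre : x.1.re = 0)
    (hxx : omul x x = 0) : ∃ q r : unitary ℍ, unitaryAct q r x = ‖x.1‖ • nullBase := by
  obtain ⟨q, hq⟩ := exists_unitary_conj_eq_smul_quatI hre
  have hqx : ‖(q : ℍ) * x.2‖ = ‖x.1‖ := by
    rw [norm_mul, CStarRing.norm_of_mem_unitary q.prop, one_mul,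
      norm_fst_eq_norm_snd_of_omul_self_eq_zero hre hxx]
  have hqx0 : (q : ℍ) * x.2 ≠ 0 := by
    rw [← norm_pos_iff, hqx]
    exact norm_fst_pos_of_omul_self_eq_zero hx hre hxx
  obtain ⟨r, hr⟩ := exists_unitary_mul_star_eq_norm hqx0
  refine ⟨q, r, Prod.ext hq ?_⟩
  rw [unitaryAct_apply, hr, hqx]
  exact (mul_one _).symm.trans (coe_mul_eq_smul _ _)

end SplitOctonion

open SplitOctonion

/-- The automorphism group of the split-octonions acts transitively on the spherization
of the null cone `K`. -/
theorem automorphisms_transitive_on_spherized_cone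
    (x y : ℍ[ℝ] × ℍ[ℝ]) (hx : x ≠ 0) (hy : y ≠ 0)
    (hx_im : (x.1).re = 0) (hxx : omul x x = 0)
    (hy_im : (y.1).re = 0) (hyy : omul y y = 0) :
    ∃ (φ : (ℍ[ℝ] × ℍ[ℝ]) →ₗ[ℝ] (ℍ[ℝ] × ℍ[ℝ])), Function.Bijective φ ∧
      (∀ u v : ℍ[ℝ] × ℍ[ℝ], φ (omul u v) = omul (φ u) (φ v)) ∧
      ∃ lam : ℝ, 0 < lam ∧ φ x = lam • y := by
  obtain ⟨qx, rx, hx_base⟩ := exists_unitaryAct_eq_smul_nullBase hx hx_im hxx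
  obtain ⟨qy, ry, hy_base⟩ := exists_unitaryAct_eq_smul_nullBase hy hy_im hyy
  have hy_pos : 0 < ‖y.1‖ := norm_fst_pos_of_omul_self_eq_zero hy hy_im hyy
  let φ := (unitaryAct qx rx).trans (unitaryAct qy ry).symm
  refine ⟨φ, φ.bijective, fun u v => ?_, ‖x.1‖ / ‖y.1‖,
    div_pos (norm_fst_pos_of_omul_self_eq_zero hx hx_im hxx) hy_pos, ?_⟩
  · simp only [φ, LinearEquiv.coe_coe, LinearEquiv.trans_apply, unitaryAct_symm, unitaryAct_omul]
  · rw [LinearEquiv.coe_coe, LinearEquiv.trans_apply, hx_base, LinearEquiv.symm_apply_eq,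
      map_smul, hy_base, smul_smul, div_mul_cancel₀ _ hy_pos.ne']
end
end
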